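/- arXiv:2506.06503 — 2 statements merged into one kernel-verified Lean document; each statement's English description precedes it below -/
import Mathlib

section
/- Every paracompact totally disconnected locally compact Hausdorff space can be written as a disjoint union of a family of compact open subsets. -/
/-!
Compact open sets form a basis of `X`, so paracompactness gives a locally finite open cover
`(v a)` with compact closures. Enlarging each `closure (v a)` to a compact open set inside the
star `⋃ {v b | v a ∩ v b ≠ ∅}` keeps the cover locally finite. In a Hausdorff space any union of
members of a locally finite family of compact open sets is clopen, so after well-ordering the
index set the sets `L a \ ⋃ b < a, L b` form a disjoint cover by compact open sets.
-/

open Set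

section LocallyFiniteStar

variable {X ι : Type*} [TopologicalSpace X] {v : ι → Set X}

theorem LocallyFinite.star (hv : LocallyFinite v) (hcl : ∀ a, IsCompact (closure (v a))) :
    LocallyFinite fun a => ⋃ (b) (_ : (v a ∩ v b).Nonempty), v b := by
  intro x
  obtain ⟨N, hN, hfin⟩ := hv x
  refine ⟨N, hN, (hfin.biUnion fun b _ => hv.finite_nonempty_inter_compact (hcl b)).subset ?_⟩
  rintro a ⟨y, hy, hyN⟩
  obtain ⟨b, hab, hyb⟩ := mem_iUnion₂.1 hy
  exact mem_biUnion (x := b) ⟨y, hyb, hyN⟩ (hab.mono (inter_subset_inter_right _ subset_closure))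

theorem closure_subset_star (hvo : ∀ a, IsOpen (v a)) (hvU : ⋃ a, v a = univ) (a : ι) :
    closure (v a) ⊆ ⋃ (b) (_ : (v a ∩ v b).Nonempty), v b := by
  intro x hx
  obtain ⟨b, hxb⟩ := mem_iUnion.1 (hvU ▸ mem_univ x)
  exact mem_iUnion₂.2 ⟨b, (mem_closure_iff.1 hx _ (hvo b) hxb).mono (by grind), hxb⟩

end LocallyFiniteStar

section Disjointify

variable {X ι : Type*} [TopologicalSpace X] [T2Space X]

theorem LocallyFinite.exists_pairwise_disjoint_isCompact_isOpen {L : ι → Set X}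
    (hL : LocallyFinite L) (hc : ∀ i, IsCompact (L i)) (ho : ∀ i, IsOpen (L i)) :
    ∃ D : ι → Set X, (∀ i, IsCompact (D i) ∧ IsOpen (D i)) ∧
      Pairwise (fun i j => Disjoint (D i) (D j)) ∧ ⋃ i, D i = ⋃ i, L i := by
  let r := @WellOrderingRel ι
  let prev : ι → Set X := fun i => ⋃ (j) (_ : r j i), L j
  have prev_isClosed (i : ι) : IsClosed (prev i) :=
    (hL.subset fun j => iUnion_subset fun _ => Subset.rfl).isClosed_iUnion
      fun j => isClosed_iUnion_of_finite fun _ => (hc j).isClosed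
  have prev_isOpen (i : ι) : IsOpen (prev i) := isOpen_biUnion fun j _ => ho j
  refine ⟨fun i => L i \ prev i, fun i => ⟨(hc i).diff (prev_isOpen i),
    (ho i).sdiff (prev_isClosed i)⟩, fun i j hij => ?_, ?_⟩
  · rcases trichotomous_of r i j with h | h | h
    · exact disjoint_left.2 fun x hxi hxj => hxj.2 (mem_biUnion h hxi.1)
    · exact absurd h hij
    · exact disjoint_left.2 fun x hxi hxj => hxi.2 (mem_biUnion h hxj.1)
  · refine (iUnion_mono fun i => sdiff_subset).antisymm fun x hx => ?_
    obtain ⟨i, hi, hmin⟩ := WellOrderingRel.isWellOrder.wf.has_min {i | x ∈ L i}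
      (mem_iUnion.1 hx)
    exact mem_iUnion.2 ⟨i, hi, fun hprev =>
      let ⟨j, hji, hxj⟩ := mem_iUnion₂.1 hprev; hmin j hxj hji⟩

end Disjointify

section CompactOpen

variable {X : Type*} [TopologicalSpace X] [T2Space X] [LocallyCompactSpace X]
  [TotallyDisconnectedSpace X]

theorem exists_isCompact_isOpen_between {C U : Set X} (hC : IsCompact C) (hU : IsOpen U)
    (hCU : C ⊆ U) : ∃ L, IsCompact L ∧ IsOpen L ∧ C ⊆ L ∧ L ⊆ U := by
  obtain ⟨K, hK, hCK, hKU⟩ := exists_compact_between hC hU hCU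
  obtain ⟨S, hS, hKS⟩ := loc_compact_Haus_tot_disc_of_zero_dim.open_eq_sUnion
    (isOpen_interior (s := K))
  obtain ⟨T, hTS, hT, hCT⟩ := hC.elim_finite_subcover_image (c := fun s => s)
    (fun s hs => (hS hs).isOpen) (sUnion_eq_biUnion ▸ hKS ▸ hCK)
  have hTK : ⋃ s ∈ T, s ⊆ K :=
    iUnion₂_subset fun s hs => (subset_sUnion_of_mem (hTS hs)).trans (hKS ▸ interior_subset)
  have hT_clopen : IsClopen (⋃ s ∈ T, s) := hT.isClopen_biUnion fun s hs => hS (hTS hs)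
  exact ⟨_, hK.of_isClosed_subset hT_clopen.isClosed hTK, hT_clopen.isOpen, hCT, hTK.trans hKU⟩

theorem exists_locallyFinite_isCompact_isOpen_cover [ParacompactSpace X] :
    ∃ L : X → Set X, (∀ a, IsCompact (L a) ∧ IsOpen (L a)) ∧ LocallyFinite L ∧
      ⋃ a, L a = univ := by
  have hK (x : X) : ∃ K, IsCompact K ∧ IsOpen K ∧ x ∈ K := by
    obtain ⟨K, hKc, hKo, hxK, -⟩ :=
      exists_isCompact_isOpen_between isCompact_singleton isOpen_univ (subset_univ {x})
    exact ⟨K, hKc, hKo, hxK rfl⟩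
  choose K hKc hKo hxK using hK
  obtain ⟨v, hvo, hvU, hvlf, hvK⟩ :=
    precise_refinement K hKo (iUnion_eq_univ_iff.2 fun x => ⟨x, hxK x⟩)
  have hcl (a : X) : IsCompact (closure (v a)) :=
    (hKc a).closure_of_subset (hvK a)
  choose L hLc hLo hvL hLstar using fun a =>
    exists_isCompact_isOpen_between (hcl a) (isOpen_biUnion fun b _ => hvo b)
      (closure_subset_star hvo hvU a)
  exact ⟨L, fun a => ⟨hLc a, hLo a⟩, (hvlf.star hcl).subset hLstar,
    univ_subset_iff.1 (hvU ▸ iUnion_mono fun a => subset_closure.trans (hvL a))⟩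

end CompactOpen

/-- Every paracompact totally disconnected locally compact Hausdorff space is a disjoint
union of a family of compact open subsets. -/
theorem stmt_11 (X : Type) [TopologicalSpace X] [T2Space X] [LocallyCompactSpace X]
    [TotallyDisconnectedSpace X] [ParacompactSpace X] :
    ∃ (I : Type) (K : I → Set X),
      (∀ i, IsCompact (K i) ∧ IsOpen (K i)) ∧
      Pairwise (fun i j => Disjoint (K i) (K j)) ∧
      ⋃ i, K i = Set.univ := by
  obtain ⟨L, hL, hLlf, hLU⟩ := exists_locallyFinite_isCompact_isOpen_cover (X := X)
  obtain ⟨D, hD, hDdisj, hDU⟩ :=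
    hLlf.exists_pairwise_disjoint_isCompact_isOpen (fun a => (hL a).1) fun a => (hL a).2
  exact ⟨X, D, hD, hDdisj, hDU.trans hLU⟩
end

section
/- Let Q be a totally disconnected locally compact Hausdorff space, R = C_c^∞(Q), and φ : M → N a homomorphism of essential R-modules. Then φ is an isomorphism if and only if the localized map φ_x : M/m_x·M → N/m_x·N is an isomorphism for every x ∈ Q (local-to-global principle). In particular, an essential R-module V with V/m_x·V = 0 for all x ∈ Q is zero. -/
open TensorProduct

theorem HasCompactSupport.add' {Z : Type*} [TopologicalSpace Z] {f g : Z → ℂ}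
    (hf : HasCompactSupport f) (hg : HasCompactSupport g) : HasCompactSupport (f + g) :=
  (hf.union hg).of_isClosed_subset isClosed_closure
    ((closure_mono (Function.support_add f g)).trans (le_of_eq closure_union))

theorem IsLocallyConstant.csmul {Z : Type*} [TopologicalSpace Z] {f : Z → ℂ} (c : ℂ)
    (hf : IsLocallyConstant f) : IsLocallyConstant (c • f) := by
  have : c • f = fun x => c * f x := by funext x; simp
  rw [this]
  exact hf.comp (c * ·)

/-- The space `C_c^∞(Z)` of locally constant compactly supported `ℂ`-valued functions,
as a `ℂ`-submodule of the function space. -/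
noncomputable def Cc (Z : Type) [TopologicalSpace Z] : Submodule ℂ (Z → ℂ) where
  carrier := {f | IsLocallyConstant f ∧ HasCompactSupport f}
  add_mem' := fun hf hg => ⟨hf.1.add hg.1, hf.2.add' hg.2⟩
  zero_mem' := ⟨IsLocallyConstant.const 0, by
    simp only [HasCompactSupport, tsupport]; simpa using isCompact_empty⟩
  smul_mem' := fun c f hf =>
    ⟨IsLocallyConstant.csmul c hf.1, hf.2.mono (Function.support_const_smul_subset c f)⟩

variable (Q : Type) [TopologicalSpace Q]

/-- Pointwise multiplication on `C_c^∞(Q)`. -/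
noncomputable def cmul (f g : Cc Q) : Cc Q :=
  ⟨(f : Q → ℂ) * (g : Q → ℂ), ⟨f.2.1.mul g.2.1, f.2.2.mul_right⟩⟩

section Modules

variable {M : Type} [AddCommGroup M] [Module ℂ M]

/-- The localising submodule `m_x · M` of an `C_c^∞(Q)`-module `(M, ρ)` at a point `x`,
spanned by the elements `ρ(f)(m)` with `f(x) = 0`. -/
noncomputable def mIdealSMul (x : Q) (ρ : Cc Q →ₗ[ℂ] M →ₗ[ℂ] M) : Submodule ℂ M :=
  Submodule.span ℂ {y : M | ∃ (f : Cc Q) (m : M), (f : Q → ℂ) x = 0 ∧ ρ f m = y}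

/-- A `C_c^∞(Q)`-module `(M, ρ)` is essential if `C_c^∞(Q)·M = M`, i.e. every element is a
finite sum of elements `ρ(f)(m)`. -/
noncomputable def IsEssentialMod (ρ : Cc Q →ₗ[ℂ] M →ₗ[ℂ] M) : Prop :=
  ∀ m : M, m ∈ AddSubgroup.closure {y : M | ∃ (f : Cc Q) (m' : M), ρ f m' = y}

end Modules

/-!
Multiplication by the indicator `χ_K` of a compact open set `K` is idempotent, and every element
of an essential module is fixed by some `χ_K`. Let `P` be a submodule stable under `C_c^∞(Q)` and
suppose `m ∈ P + m_x·M` for every `x`. A function vanishing at `x` vanishes on a compact open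
neighbourhood of `x`, so every `x` has a compact open neighbourhood `U` with `χ_U·m ∈ P`. Finitely
many of these cover `K`, and cutting `K` into disjoint compact open pieces, each inside one `U`,
gives `m = χ_K·m ∈ P`. Taking `P = 0` gives the vanishing statement and the injectivity of `φ`;
taking `P = range φ` gives its surjectivity.
-/

open TopologicalSpace

section IndicatorFunctions

variable {Q}

theorem cmul_comm (f g : Cc Q) : cmul Q f g = cmul Q g f :=
  Subtype.ext (mul_comm _ _)

variable [T2Space Q]

namespace Cc

noncomputable def indicator (U : CompactOpens Q) : Cc Q :=
  ⟨Set.indicator U 1, by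
    rw [← LocallyConstant.coe_charFn ℂ (U := (U : Set Q)) ⟨U.isCompact.isClosed, U.isOpen⟩]
    exact LocallyConstant.isLocallyConstant _,
    HasCompactSupport.intro U.isCompact fun _ hx => Set.indicator_of_notMem hx _⟩

@[simp]
theorem coe_indicator (U : CompactOpens Q) : (indicator U : Q → ℂ) = Set.indicator U 1 := rfl

theorem indicator_bot : indicator (⊥ : CompactOpens Q) = 0 := by
  ext1; funext q; simp

theorem indicator_sup_eq_add_sdiff (K L : CompactOpens Q) :
    indicator (K ⊔ L) = indicator K + indicator (L \ K) := by
  ext1; funext q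
  by_cases hK : q ∈ K <;> by_cases hL : q ∈ L <;>
    simp [CompactOpens.coe_sup, CompactOpens.coe_sdiff, hK, hL]

theorem cmul_indicator_of_support_subset {U : CompactOpens Q} {f : Cc Q}
    (h : Function.support (f : Q → ℂ) ⊆ U) : cmul Q (indicator U) f = f := by
  ext1; funext q
  show Set.indicator U 1 q * (f : Q → ℂ) q = (f : Q → ℂ) q
  by_cases hq : q ∈ U
  · simp [hq]
  · simp [hq, Function.notMem_support.1 (mt (@h q) hq)]

theorem cmul_indicator_of_eqOn_zero {U : CompactOpens Q} {f : Cc Q}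
    (h : ∀ q ∈ U, (f : Q → ℂ) q = 0) : cmul Q (indicator U) f = 0 := by
  ext1; funext q
  show Set.indicator U 1 q * (f : Q → ℂ) q = 0
  by_cases hq : q ∈ U
  · simp [h q hq]
  · simp [hq]

theorem cmul_indicator_indicator_of_le {K L : CompactOpens Q} (hKL : K ≤ L) :
    cmul Q (indicator L) (indicator K) = indicator K :=
  cmul_indicator_of_support_subset <| by
    simpa [coe_indicator, Set.support_indicator] using hKL

noncomputable def supportCompactOpens (f : Cc Q) : CompactOpens Q :=
  ⟨⟨Function.support (f : Q → ℂ), f.2.2.of_isClosed_subset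
      (f.2.1 {0}).isClosed_compl subset_closure⟩, f.2.1 {0}ᶜ⟩

theorem cmul_indicator_supportCompactOpens (f : Cc Q) :
    cmul Q (indicator (supportCompactOpens f)) f = f :=
  cmul_indicator_of_support_subset subset_rfl

end Cc

theorem CompactOpens.exists_mem_subset [LocallyCompactSpace Q] [TotallyDisconnectedSpace Q]
    {x : Q} {W : Set Q} (hW : IsOpen W) (hx : x ∈ W) :
    ∃ U : CompactOpens Q, x ∈ U ∧ (U : Set Q) ⊆ W := by
  obtain ⟨K, hK, hxK, hKW⟩ := exists_compact_subset hW hx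
  obtain ⟨V, hV, hxV, hVK⟩ := loc_compact_Haus_tot_disc_of_zero_dim.mem_nhds_iff.1
    (isOpen_interior.mem_nhds hxK)
  have hVK : V ⊆ K := hVK.trans interior_subset
  exact ⟨⟨⟨V, hK.of_isClosed_subset hV.1 hVK⟩, hV.2⟩, hxV, hVK.trans hKW⟩

end IndicatorFunctions

section LocalToGlobal

open Cc

variable {Q} {M : Type} [AddCommGroup M] [Module ℂ M]

theorem map_mIdealSMul_of_surjective {N : Type} [AddCommGroup N] [Module ℂ N]
    {ρM : Cc Q →ₗ[ℂ] M →ₗ[ℂ] M} {ρN : Cc Q →ₗ[ℂ] N →ₗ[ℂ] N}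
    {φ : M →ₗ[ℂ] N} (hφ : ∀ (f : Cc Q) (m : M), φ (ρM f m) = ρN f (φ m))
    (hφs : Function.Surjective φ) (x : Q) :
    (mIdealSMul Q x ρM).map φ = mIdealSMul Q x ρN := by
  rw [mIdealSMul, mIdealSMul, Submodule.map_span]
  congr 1
  ext y
  constructor
  · rintro ⟨_, ⟨f, m, hf, rfl⟩, rfl⟩
    exact ⟨f, φ m, hf, (hφ f m).symm⟩
  · rintro ⟨f, n, hf, rfl⟩
    obtain ⟨m, rfl⟩ := hφs n
    exact ⟨ρM f m, ⟨f, m, hf, rfl⟩, hφ f m⟩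

variable [T2Space Q] {ρ : Cc Q →ₗ[ℂ] M →ₗ[ℂ] M}

theorem indicator_smul_indicator_smul_of_le
    (hρ : ∀ (f g : Cc Q) (m : M), ρ (cmul Q f g) m = ρ f (ρ g m))
    {K L : CompactOpens Q} (hKL : K ≤ L) (m : M) :
    ρ (indicator K) (ρ (indicator L) m) = ρ (indicator K) m := by
  rw [← hρ, cmul_comm, cmul_indicator_indicator_of_le hKL]

theorem indicator_smul_indicator_smul_of_ge
    (hρ : ∀ (f g : Cc Q) (m : M), ρ (cmul Q f g) m = ρ f (ρ g m))
    {K L : CompactOpens Q} (hKL : K ≤ L) (m : M) :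
    ρ (indicator L) (ρ (indicator K) m) = ρ (indicator K) m := by
  rw [← hρ, cmul_indicator_indicator_of_le hKL]

theorem exists_indicator_smul_eq_self
    (hρ : ∀ (f g : Cc Q) (m : M), ρ (cmul Q f g) m = ρ f (ρ g m))
    (hess : IsEssentialMod Q ρ) (m : M) : ∃ K : CompactOpens Q, ρ (indicator K) m = m := by
  have fixed_of_le {K L : CompactOpens Q} {m : M} (hKL : K ≤ L)
      (hK : ρ (indicator K) m = m) : ρ (indicator L) m = m := by
    rw [← hK, indicator_smul_indicator_smul_of_ge hρ hKL]
  refine AddSubgroup.closure_induction ?_ ⟨⊥, map_zero _⟩ ?_ ?_ (hess m)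
  · rintro _ ⟨f, m, rfl⟩
    exact ⟨supportCompactOpens f, by rw [← hρ, cmul_indicator_supportCompactOpens]⟩
  · rintro m₁ m₂ - - ⟨K₁, hK₁⟩ ⟨K₂, hK₂⟩
    exact ⟨K₁ ⊔ K₂, by
      rw [map_add, fixed_of_le le_sup_left hK₁, fixed_of_le le_sup_right hK₂]⟩
  · rintro m - ⟨K, hK⟩
    exact ⟨K, by rw [map_neg, hK]⟩

theorem exists_indicator_smul_eq_zero [LocallyCompactSpace Q] [TotallyDisconnectedSpace Q]
    (hρ : ∀ (f g : Cc Q) (m : M), ρ (cmul Q f g) m = ρ f (ρ g m))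
    {x : Q} {m : M} (hm : m ∈ mIdealSMul Q x ρ) :
    ∃ U : CompactOpens Q, x ∈ U ∧ ρ (indicator U) m = 0 := by
  refine Submodule.span_induction ?_ ?_ ?_ ?_ hm
  · rintro _ ⟨f, m, hfx, rfl⟩
    obtain ⟨U, hxU, hU⟩ := CompactOpens.exists_mem_subset (f.2.1 {0}) hfx
    refine ⟨U, hxU, ?_⟩
    rw [← hρ, cmul_indicator_of_eqOn_zero fun q hq => hU hq, map_zero, LinearMap.zero_apply]
  · obtain ⟨U, hxU, -⟩ := CompactOpens.exists_mem_subset isOpen_univ (Set.mem_univ x)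
    exact ⟨U, hxU, map_zero _⟩
  · rintro m₁ m₂ - - ⟨U₁, hx₁, h₁⟩ ⟨U₂, hx₂, h₂⟩
    refine ⟨U₁ ⊓ U₂, ⟨hx₁, hx₂⟩, ?_⟩
    rw [map_add, ← indicator_smul_indicator_smul_of_le hρ inf_le_left m₁, h₁,
      ← indicator_smul_indicator_smul_of_le hρ inf_le_right m₂, h₂, map_zero, add_zero]
  · rintro c m - ⟨U, hxU, h⟩
    exact ⟨U, hxU, by rw [map_smul, h, smul_zero]⟩

variable {P : Submodule ℂ M}

theorem indicator_smul_mem_of_le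
    (hρ : ∀ (f g : Cc Q) (m : M), ρ (cmul Q f g) m = ρ f (ρ g m))
    (hP : ∀ (f : Cc Q), ∀ m ∈ P, ρ f m ∈ P) {K L : CompactOpens Q} (hKL : K ≤ L) {m : M}
    (hL : ρ (indicator L) m ∈ P) : ρ (indicator K) m ∈ P := by
  rw [← indicator_smul_indicator_smul_of_le hρ hKL]
  exact hP _ _ hL

theorem indicator_sup_smul_mem
    (hρ : ∀ (f g : Cc Q) (m : M), ρ (cmul Q f g) m = ρ f (ρ g m))
    (hP : ∀ (f : Cc Q), ∀ m ∈ P, ρ f m ∈ P) {K L : CompactOpens Q} {m : M}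
    (hK : ρ (indicator K) m ∈ P) (hL : ρ (indicator L) m ∈ P) :
    ρ (indicator (K ⊔ L)) m ∈ P := by
  rw [indicator_sup_eq_add_sdiff, map_add, LinearMap.add_apply]
  exact P.add_mem hK (indicator_smul_mem_of_le hρ hP sdiff_le hL)

theorem mem_of_forall_exists_indicator_smul_mem
    (hρ : ∀ (f g : Cc Q) (m : M), ρ (cmul Q f g) m = ρ f (ρ g m))
    (hess : IsEssentialMod Q ρ) (hP : ∀ (f : Cc Q), ∀ m ∈ P, ρ f m ∈ P) {m : M}
    (hloc : ∀ x : Q, ∃ U : CompactOpens Q, x ∈ U ∧ ρ (indicator U) m ∈ P) : m ∈ P := by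
  choose U hxU hU using hloc
  obtain ⟨K, hK⟩ := exists_indicator_smul_eq_self hρ hess m
  obtain ⟨t, ht⟩ := K.isCompact.elim_finite_subcover (fun x => U x) (fun x => (U x).isOpen)
    fun q _ => Set.mem_iUnion.2 ⟨q, hxU q⟩
  have hKt : K ≤ t.sup U := by
    rw [← SetLike.coe_subset_coe, CompactOpens.coe_finsetSup]
    exact ht
  have hcover : ρ (indicator (t.sup U)) m ∈ P :=
    Finset.sup_induction (p := fun L => ρ (indicator L) m ∈ P)
      (by rw [indicator_bot, map_zero]; exact P.zero_mem)
      (fun _ h₁ _ h₂ => indicator_sup_smul_mem hρ hP h₁ h₂) fun x _ => hU x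
  rw [← hK]
  exact indicator_smul_mem_of_le hρ hP hKt hcover

theorem mem_of_forall_mem_sup_mIdealSMul [LocallyCompactSpace Q] [TotallyDisconnectedSpace Q]
    (hρ : ∀ (f g : Cc Q) (m : M), ρ (cmul Q f g) m = ρ f (ρ g m))
    (hess : IsEssentialMod Q ρ) (hP : ∀ (f : Cc Q), ∀ m ∈ P, ρ f m ∈ P) {m : M}
    (h : ∀ x : Q, m ∈ P ⊔ mIdealSMul Q x ρ) : m ∈ P := by
  refine mem_of_forall_exists_indicator_smul_mem hρ hess hP fun x => ?_
  obtain ⟨p, hp, y, hy, rfl⟩ := Submodule.mem_sup.1 (h x)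
  obtain ⟨U, hxU, hUy⟩ := exists_indicator_smul_eq_zero hρ hy
  exact ⟨U, hxU, by rw [map_add, hUy, add_zero]; exact hP _ _ hp⟩

theorem eq_zero_of_forall_mem_mIdealSMul [LocallyCompactSpace Q] [TotallyDisconnectedSpace Q]
    (hρ : ∀ (f g : Cc Q) (m : M), ρ (cmul Q f g) m = ρ f (ρ g m))
    (hess : IsEssentialMod Q ρ) {m : M} (h : ∀ x : Q, m ∈ mIdealSMul Q x ρ) : m = 0 := by
  rw [← Submodule.mem_bot ℂ]
  refine mem_of_forall_mem_sup_mIdealSMul hρ hess (fun f m hm => ?_) (by simpa using h)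
  rw [(Submodule.mem_bot ℂ).1 hm, map_zero]
  exact Submodule.zero_mem _

end LocalToGlobal

/-- Local-to-global principle: a homomorphism `φ : M → N` of essential `C_c^∞(Q)`-modules
is an isomorphism if and only if all its localisations `φ_x : M/m_x·M → N/m_x·N` are
isomorphisms; in particular an essential module all of whose localisations vanish is zero. -/
theorem stmt_19 [T2Space Q] [LocallyCompactSpace Q] [TotallyDisconnectedSpace Q]
    (M N : Type) [AddCommGroup M] [Module ℂ M] [AddCommGroup N] [Module ℂ N]
    (ρM : Cc Q →ₗ[ℂ] M →ₗ[ℂ] M) (ρN : Cc Q →ₗ[ℂ] N →ₗ[ℂ] N)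
    (hM : ∀ (f g : Cc Q) (m : M), ρM (cmul Q f g) m = ρM f (ρM g m))
    (hN : ∀ (f g : Cc Q) (m : N), ρN (cmul Q f g) m = ρN f (ρN g m))
    (eM : IsEssentialMod Q ρM) (eN : IsEssentialMod Q ρN)
    (φ : M →ₗ[ℂ] N) (hφ : ∀ (f : Cc Q) (m : M), φ (ρM f m) = ρN f (φ m)) :
    (Function.Bijective φ ↔
      ∀ x : Q, (∀ m : M, φ m ∈ mIdealSMul Q x ρN → m ∈ mIdealSMul Q x ρM) ∧
               (∀ n : N, ∃ m : M, n - φ m ∈ mIdealSMul Q x ρN)) ∧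
    ((∀ x : Q, mIdealSMul Q x ρM = ⊤) → ∀ m : M, m = 0) := by
  have range_stable : ∀ (f : Cc Q), ∀ n ∈ LinearMap.range φ, ρN f n ∈ LinearMap.range φ := by
    rintro f _ ⟨m, rfl⟩
    exact ⟨ρM f m, hφ f m⟩
  refine ⟨⟨fun hbij x => ⟨fun m hm => ?_, fun n => ?_⟩, fun hloc => ⟨?_, fun n => ?_⟩⟩,
    fun htop m => eq_zero_of_forall_mem_mIdealSMul hM eM fun x => htop x ▸ trivial⟩
  · rw [← map_mIdealSMul_of_surjective hφ hbij.2] at hm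
    obtain ⟨m', hm', hφm⟩ := hm
    rwa [← hbij.1 hφm]
  · obtain ⟨m, rfl⟩ := hbij.2 n
    exact ⟨m, by rw [sub_self]; exact Submodule.zero_mem _⟩
  · refine (injective_iff_map_eq_zero φ).2 fun m hm => ?_
    refine eq_zero_of_forall_mem_mIdealSMul hM eM fun x => (hloc x).1 m ?_
    rw [hm]
    exact Submodule.zero_mem _
  · refine mem_of_forall_mem_sup_mIdealSMul hN eN range_stable fun x => ?_
    obtain ⟨m, hm⟩ := (hloc x).2 n
    exact Submodule.mem_sup.2 ⟨φ m, ⟨m, rfl⟩, n - φ m, hm, add_sub_cancel _ _⟩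
end
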